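/- arXiv:2004.05998 — 3 statements merged into one kernel-verified Lean document; each statement's English description precedes it below -/
import Mathlib

section
/- Let (A,↖,↗) be a 3-L-dendriform algebra over a field K of characteristic 0. Then the vertical operation {x,y,z}^v = ↖(x,y,z) + ↗(z,x,y) − ↗(z,y,x) defines a 3-pre-Lie algebra structure on A. -/
universe u v w

variable (K : Type u) [Field K] [CharZero K]

section MultilinearDefs

variable {M₁ M₂ M₃ M₄ : Type*}
  [AddCommGroup M₁] [Module K M₁] [AddCommGroup M₂] [Module K M₂]
  [AddCommGroup M₃] [Module K M₃] [AddCommGroup M₄] [Module K M₄]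

/-- A map `f : M₁ → M₂ → M₃ → M₄` which is `K`-linear in each of its three arguments. -/
def IsTrilinearMap (f : M₁ → M₂ → M₃ → M₄) : Prop :=
  (∀ (c : K) (x x' : M₁) (y : M₂) (z : M₃), f (c • x + x') y z = c • f x y z + f x' y z) ∧
  (∀ (c : K) (x : M₁) (y y' : M₂) (z : M₃), f x (c • y + y') z = c • f x y z + f x y' z) ∧
  (∀ (c : K) (x : M₁) (y : M₂) (z z' : M₃), f x y (c • z + z') = c • f x y z + f x y z')

end MultilinearDefs

section Algebras

variable {A : Type*} [AddCommGroup A] [Module K A]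
variable {V : Type*} [AddCommGroup V] [Module K V]

/-- The induced 3-commutator `[x,y,z]^C = {x,y,z} + {y,z,x} + {z,x,y}` of a ternary
operation. -/
def preC (p : A → A → A → A) : A → A → A → A :=
  fun x y z => p x y z + p y z x + p z x y

/-- A (trilinear) bracket makes `A` a 3-Lie algebra: it is skew-symmetric (alternating)
and satisfies the fundamental identity. -/
def Is3Lie (br : A → A → A → A) : Prop :=
  IsTrilinearMap K br ∧
  (∀ x y z : A, br x y z = - br y x z) ∧
  (∀ x y z : A, br x y z = - br x z y) ∧
  (∀ x1 x2 x3 x4 x5 : A,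
    br x1 x2 (br x3 x4 x5)
      = br (br x1 x2 x3) x4 x5 + br x3 (br x1 x2 x4) x5 + br x3 x4 (br x1 x2 x5))

/-- A (trilinear) operation makes `A` a 3-pre-Lie algebra: (P0), (P1), (P2). -/
def Is3PreLie (p : A → A → A → A) : Prop :=
  IsTrilinearMap K p ∧
  (∀ x y z : A, p x y z = - p y x z) ∧
  (∀ x1 x2 x3 x4 x5 : A,
    p x1 x2 (p x3 x4 x5)
      = p (preC p x1 x2 x3) x4 x5 + p x3 (preC p x1 x2 x4) x5 + p x3 x4 (p x1 x2 x5)) ∧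
  (∀ x1 x2 x3 x4 x5 : A,
    p (preC p x1 x2 x3) x4 x5
      = p x1 x2 (p x3 x4 x5) + p x2 x3 (p x1 x4 x5) + p x3 x1 (p x2 x4 x5))

/-- `ρ` is a representation of the 3-Lie algebra `(A, br)` on `V`. -/
def Is3LieRep (br : A → A → A → A) (ρ : A → A → V → V) : Prop :=
  IsTrilinearMap K ρ ∧
  (∀ (x y : A) (v : V), ρ x y v = - ρ y x v) ∧
  (∀ (x1 x2 x3 x4 : A) (v : V),
    ρ x1 x2 (ρ x3 x4 v) - ρ x3 x4 (ρ x1 x2 v)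
      = ρ (br x1 x2 x3) x4 v - ρ (br x1 x2 x4) x3 v) ∧
  (∀ (x1 x2 x3 x4 : A) (v : V),
    ρ (br x1 x2 x3) x4 v
      = ρ x1 x2 (ρ x3 x4 v) + ρ x2 x3 (ρ x1 x4 v) + ρ x3 x1 (ρ x2 x4 v))

/-- `(l, r)` is a representation of the 3-pre-Lie algebra `(A, p)` on `V`:
`l` is skew-symmetric and a representation of the sub-adjacent 3-Lie algebra,
together with conditions (rep1)-(rep4), where `μ(x,y) = l(x,y) + r(x,y) - r(y,x)`. -/
def Is3PreLieRep (p : A → A → A → A) (l r : A → A → V → V) : Prop :=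
  IsTrilinearMap K l ∧ IsTrilinearMap K r ∧
  Is3LieRep K (preC p) l ∧
  (∀ (x1 x2 x3 x4 : A) (v : V),
    l x1 x2 (r x3 x4 v)
      = r x3 x4 (l x1 x2 v + r x1 x2 v - r x2 x1 v)
        + r (preC p x1 x2 x3) x4 v + r x3 (p x1 x2 x4) v) ∧
  (∀ (x1 x2 x3 x4 : A) (v : V),
    r (preC p x1 x2 x3) x4 v
      = l x1 x2 (r x3 x4 v) + l x2 x3 (r x1 x4 v) + l x3 x1 (r x2 x4 v)) ∧
  (∀ (x1 x2 x3 x4 : A) (v : V),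
    r x1 (p x2 x3 x4) v
      = r x3 x4 (l x1 x2 v + r x1 x2 v - r x2 x1 v)
        - r x2 x4 (l x1 x3 v + r x1 x3 v - r x3 x1 v) + l x2 x3 (r x1 x4 v)) ∧
  (∀ (x1 x2 x3 x4 : A) (v : V),
    r x3 x4 (l x1 x2 v + r x1 x2 v - r x2 x1 v)
      = l x1 x2 (r x3 x4 v) - r x2 (p x1 x3 x4) v + r x1 (p x2 x3 x4) v)

/-- `T : V → A` is an `𝒪`-operator on the 3-Lie algebra `(A, br)` associated to the
representation `ρ` of `A` on `V`. -/
def IsOOperator3Lie (br : A → A → A → A) (ρ : A → A → V → V) (T : V →ₗ[K] A) : Prop :=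
  ∀ u v w : V,
    br (T u) (T v) (T w) = T (ρ (T u) (T v) w + ρ (T v) (T w) u + ρ (T w) (T u) v)

/-- `T : V → A` is an `𝒪`-operator on the 3-pre-Lie algebra `(A, p)` associated to the
representation `(l, r)` of `A` on `V`. -/
def IsOOperator3PreLie (p : A → A → A → A) (l r : A → A → V → V) (T : V →ₗ[K] A) : Prop :=
  ∀ u v w : V,
    p (T u) (T v) (T w) = T (l (T u) (T v) w - r (T u) (T w) v + r (T v) (T w) u)

/-- `R : A → A` is a Rota-Baxter operator of weight 0 on the ternary algebra `(A, br)`. -/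
def IsRotaBaxter3 (br : A → A → A → A) (R : A →ₗ[K] A) : Prop :=
  ∀ x y z : A,
    br (R x) (R y) (R z) = R (br (R x) (R y) z + br (R x) y (R z) + br x (R y) (R z))

/-- The horizontal operation `{x,y,z}^h = ↖(x,y,z) + ↗(x,y,z) - ↗(y,x,z)`. -/
def hOp (nw ne : A → A → A → A) : A → A → A → A :=
  fun x y z => nw x y z + ne x y z - ne y x z

/-- The vertical operation `{x,y,z}^v = ↖(x,y,z) + ↗(z,x,y) - ↗(z,y,x)`. -/
def vOp (nw ne : A → A → A → A) : A → A → A → A :=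
  fun x y z => nw x y z + ne z x y - ne z y x

/-- The bracket `[x,y,z]^C = {x,y,z}^h + {y,z,x}^h + {z,x,y}^h`. -/
def cOp (nw ne : A → A → A → A) : A → A → A → A :=
  fun x y z => hOp nw ne x y z + hOp nw ne y z x + hOp nw ne z x y

/-- `(A, nw, ne)` (with `nw = ↖`, `ne = ↗`) is a 3-L-dendriform algebra: axioms (L0)-(L6). -/
def Is3LDendriform (nw ne : A → A → A → A) : Prop :=
  IsTrilinearMap K nw ∧ IsTrilinearMap K ne ∧
  (∀ x1 x2 x3 : A, nw x1 x2 x3 + nw x2 x1 x3 = 0) ∧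
  (∀ x1 x2 x3 x4 x5 : A,
    nw x1 x2 (nw x3 x4 x5) - nw x3 x4 (nw x1 x2 x5)
      = nw (cOp nw ne x1 x2 x3) x4 x5 - nw (cOp nw ne x1 x2 x4) x3 x5) ∧
  (∀ x1 x2 x3 x4 x5 : A,
    nw x1 x2 (ne x5 x3 x4) - ne x5 x3 (hOp nw ne x1 x2 x4)
      = ne x5 (cOp nw ne x1 x2 x3) x4 + ne (vOp nw ne x1 x2 x5) x3 x4) ∧
  (∀ x1 x2 x3 x4 x5 : A,
    ne x5 x1 (hOp nw ne x2 x3 x4) - nw x2 x3 (ne x5 x1 x4)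
      = ne (vOp nw ne x1 x2 x5) x3 x4 - ne (vOp nw ne x1 x3 x5) x2 x4) ∧
  (∀ x1 x2 x3 x4 x5 : A,
    nw (cOp nw ne x1 x2 x3) x4 x5
      = nw x1 x2 (nw x3 x4 x5) + nw x2 x3 (nw x1 x4 x5) + nw x3 x1 (nw x2 x4 x5)) ∧
  (∀ x1 x2 x3 x4 x5 : A,
    ne x5 (cOp nw ne x1 x2 x3) x4
      = nw x1 x2 (ne x5 x3 x4) + nw x2 x3 (ne x5 x1 x4) + nw x3 x1 (ne x5 x2 x4)) ∧
  (∀ x1 x2 x3 x4 x5 : A,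
    nw x1 x2 (ne x5 x3 x4) + ne x5 x1 (hOp nw ne x2 x3 x4)
      = ne x5 x2 (hOp nw ne x1 x3 x4) + ne (vOp nw ne x1 x2 x5) x3 x4)

end Algebras

/-! A 3-L-dendriform structure is exactly a representation `(l, r)` of `(A, {·,·,·}^h)` on `A`
itself, with `l(x,y)z = ↖(x,y,z)` and `r(x,y)z = ↗(z,x,y)`, and then
`{x,y,z}^v = μ(x,y)z` for `μ(x,y) = l(x,y) + r(x,y) - r(y,x)`. For any such representation `μ`
represents the sub-adjacent 3-Lie algebra. Since `{·,·,·}^h` and `{·,·,·}^v` induce the same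
bracket `[·,·,·]^C`, the left multiplication of `{·,·,·}^v` represents its own induced bracket,
and for a skew-symmetric operation this is exactly (P1) and (P2). -/

namespace IsTrilinearMap

variable {k : Type*} [Field k] {M₁ M₂ M₃ M₄ : Type*}
  [AddCommGroup M₁] [Module k M₁] [AddCommGroup M₂] [Module k M₂]
  [AddCommGroup M₃] [Module k M₃] [AddCommGroup M₄] [Module k M₄]
  {f : M₁ → M₂ → M₃ → M₄}

theorem map_add₁ (hf : IsTrilinearMap k f) (x x' : M₁) (y : M₂) (z : M₃) :
    f (x + x') y z = f x y z + f x' y z := by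
  simpa using hf.1 1 x x' y z

theorem map_add₂ (hf : IsTrilinearMap k f) (x : M₁) (y y' : M₂) (z : M₃) :
    f x (y + y') z = f x y z + f x y' z := by
  simpa using hf.2.1 1 x y y' z

theorem map_add₃ (hf : IsTrilinearMap k f) (x : M₁) (y : M₂) (z z' : M₃) :
    f x y (z + z') = f x y z + f x y z' := by
  simpa using hf.2.2 1 x y z z'

theorem map_sub₃ (hf : IsTrilinearMap k f) (x : M₁) (y : M₂) (z z' : M₃) :
    f x y (z - z') = f x y z - f x y z' := by
  rw [eq_sub_iff_add_eq, ← hf.map_add₃, sub_add_cancel]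

end IsTrilinearMap

section Representations

variable {k : Type*} [Field k] {A : Type*} [AddCommGroup A] [Module k A]
  {V : Type*} [AddCommGroup V] [Module k V]

def subadjacentRep (l r : A → A → V → V) : A → A → V → V :=
  fun x y v => l x y v + r x y v - r y x v

theorem IsTrilinearMap.subadjacentRep {l r : A → A → V → V} (hl : IsTrilinearMap k l)
    (hr : IsTrilinearMap k r) : IsTrilinearMap k (subadjacentRep l r) := by
  refine ⟨fun c x x' y v => ?_, fun c x y y' v => ?_, fun c x y v v' => ?_⟩ <;>
    simp only [_root_.subadjacentRep]
  · rw [hl.1, hr.1, hr.2.1]; module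
  · rw [hl.2.1, hr.2.1, hr.1]; module
  · rw [hl.2.2, hr.2.2, hr.2.2]; module

namespace Is3PreLieRep

variable {p : A → A → A → A} {l r : A → A → V → V}

theorem subadjacentRep_comm (h : Is3PreLieRep k p l r) (x1 x2 x3 x4 : A) (v : V) :
    subadjacentRep l r x1 x2 (subadjacentRep l r x3 x4 v)
        - subadjacentRep l r x3 x4 (subadjacentRep l r x1 x2 v)
      = subadjacentRep l r (preC p x1 x2 x3) x4 v
        - subadjacentRep l r (preC p x1 x2 x4) x3 v := by
  obtain ⟨hl, hr, ⟨-, -, l_comm, -⟩, rep1, rep2, rep3, rep4⟩ := h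
  linear_combination (norm := (simp only [subadjacentRep, preC, hl.map_add₁, hl.map_add₃,
      hl.map_sub₃, hr.map_add₁, hr.map_add₂, hr.map_add₃, hr.map_sub₃]; abel))
    l_comm x1 x2 x3 x4 v + rep1 x1 x2 x3 x4 v - rep1 x1 x2 x4 x3 v + rep1 x1 x3 x4 x2 v
      - rep1 x2 x3 x4 x1 v - rep1 x3 x1 x4 x2 v + rep1 x3 x4 x2 x1 v
      + rep2 x1 x3 x4 x2 v - rep2 x1 x4 x3 x2 v + rep3 x1 x4 x3 x2 v - rep3 x3 x4 x1 x2 v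
      + rep4 x1 x4 x3 x2 v - rep4 x2 x3 x4 x1 v

theorem subadjacentRep_preC (h : Is3PreLieRep k p l r) (x1 x2 x3 x4 : A) (v : V) :
    subadjacentRep l r (preC p x1 x2 x3) x4 v
      = subadjacentRep l r x1 x2 (subadjacentRep l r x3 x4 v)
        + subadjacentRep l r x2 x3 (subadjacentRep l r x1 x4 v)
        + subadjacentRep l r x3 x1 (subadjacentRep l r x2 x4 v) := by
  obtain ⟨hl, hr, ⟨-, -, -, l_preC⟩, rep1, rep2, rep3, -⟩ := h
  linear_combination (norm := (simp only [subadjacentRep, preC, hl.map_add₁, hl.map_add₃,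
      hl.map_sub₃, hr.map_add₁, hr.map_add₂, hr.map_add₃, hr.map_sub₃]; abel))
    l_preC x1 x2 x3 x4 v + rep1 x1 x2 x4 x3 v - rep1 x1 x4 x3 x2 v + rep1 x2 x3 x4 x1 v
      - rep1 x2 x4 x1 x3 v + rep1 x3 x1 x4 x2 v - rep1 x3 x4 x2 x1 v + rep2 x1 x2 x3 x4 v
      - rep3 x1 x2 x4 x3 v - rep3 x2 x3 x4 x1 v - rep3 x3 x1 x4 x2 v

theorem is3LieRep_subadjacentRep (h : Is3PreLieRep k p l r) :
    Is3LieRep k (preC p) (subadjacentRep l r) := by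
  refine ⟨h.1.subadjacentRep h.2.1, fun x y v => ?_, h.subadjacentRep_comm,
    h.subadjacentRep_preC⟩
  obtain ⟨-, -, ⟨-, l_skew, -, -⟩, -⟩ := h
  simp only [subadjacentRep]
  rw [l_skew]
  abel

end Is3PreLieRep

theorem is3PreLie_of_is3LieRep_preC {p : A → A → A → A} (h : Is3LieRep k (preC p) p) :
    Is3PreLie k p := by
  obtain ⟨hp, skew, comm, cyc⟩ := h
  refine ⟨hp, skew, fun x1 x2 x3 x4 x5 => ?_, cyc⟩
  linear_combination (norm := abel) comm x1 x2 x3 x4 x5 - skew x3 (preC p x1 x2 x4) x5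

theorem preC_hOp (nw ne : A → A → A → A) : preC (hOp nw ne) = cOp nw ne := rfl

theorem preC_vOp (nw ne : A → A → A → A) : preC (vOp nw ne) = cOp nw ne := by
  funext x y z
  simp only [preC, vOp, cOp, hOp]
  abel

theorem Is3LDendriform.is3PreLieRep {nw ne : A → A → A → A} (h : Is3LDendriform k nw ne) :
    Is3PreLieRep k (hOp nw ne) nw (fun x y z => ne z x y) := by
  obtain ⟨hnw, hne, L0, L1, L2, L3, L4, L5, L6⟩ := h
  refine ⟨hnw, ⟨fun c x x' y z => hne.2.1 c z x x' y, fun c x y y' z => hne.2.2 c z x y y',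
      fun c x y z z' => hne.1 c z z' x y⟩,
    ⟨hnw, fun x y z => eq_neg_of_add_eq_zero_left (L0 x y z), L1, L4⟩,
    fun x1 x2 x3 x4 v => ?_, L5, fun x1 x2 x3 x4 v => ?_, fun x1 x2 x3 x4 v => ?_⟩
  · linear_combination (norm := (simp only [vOp, preC_hOp]; abel)) L2 x1 x2 x3 x4 v
  · linear_combination (norm := (simp only [vOp]; abel)) L3 x1 x2 x3 x4 v
  · linear_combination (norm := (simp only [vOp]; abel)) -L6 x1 x2 x3 x4 v

end Representations

/-- The vertical operation `{·,·,·}^v` of a 3-L-dendriform algebra defines a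
3-pre-Lie algebra structure on `A`. -/
theorem stmt10 {A : Type v} [AddCommGroup A] [Module K A]
    (nw ne : A → A → A → A) (hden : Is3LDendriform K nw ne) :
    Is3PreLie K (vOp nw ne) := by
  apply is3PreLie_of_is3LieRep_preC
  rw [preC_vOp]
  exact hden.is3PreLieRep.is3LieRep_subadjacentRep
end

section
/- Let (A,↖,↗) be a 3-L-dendriform algebra over a field K of characteristic 0. Define ρ : A×A → End(A) by ρ(x,y)z = ↖(x,y,z) + ↗(z,x,y) − ↗(z,y,x). Then (A,ρ) is a representation of the associated 3-Lie algebra (A,[·,·,·]^C), where [x,y,z]^C = {x,y,z}^h + {y,z,x}^h + {z,x,y}^h and {x,y,z}^h = ↖(x,y,z) + ↗(x,y,z) − ↗(y,x,z). -/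
universe u v w

variable (K : Type u) [Field K] [CharZero K]

section AuxTri

variable {M₁ M₂ M₃ M₄ : Type*}
  [AddCommGroup M₁] [Module K M₁] [AddCommGroup M₂] [Module K M₂]
  [AddCommGroup M₃] [Module K M₃] [AddCommGroup M₄] [Module K M₄]
  {f : M₁ → M₂ → M₃ → M₄}

theorem tri_add1 (h : IsTrilinearMap K f) :
    ∀ (x x' : M₁) (y : M₂) (z : M₃), f (x + x') y z = f x y z + f x' y z := by
  intro x x' y z; have := h.1 1 x x' y z; simpa using this

theorem tri_add2 (h : IsTrilinearMap K f) :
    ∀ (x : M₁) (y y' : M₂) (z : M₃), f x (y + y') z = f x y z + f x y' z := by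
  intro x y y' z; have := h.2.1 1 x y y' z; simpa using this

theorem tri_add3 (h : IsTrilinearMap K f) :
    ∀ (x : M₁) (y : M₂) (z z' : M₃), f x y (z + z') = f x y z + f x y z' := by
  intro x y z z'; have := h.2.2 1 x y z z'; simpa using this

theorem tri_neg1 (h : IsTrilinearMap K f) :
    ∀ (x : M₁) (y : M₂) (z : M₃), f (-x) y z = - f x y z := by
  intro x y z
  have h0 : f 0 y z = 0 := by
    have := tri_add1 K h 0 0 y z; simpa using this.symm
  have := tri_add1 K h x (-x) y z
  rw [add_neg_cancel, h0] at this
  exact (eq_neg_of_add_eq_zero_right this.symm)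

theorem tri_neg2 (h : IsTrilinearMap K f) :
    ∀ (x : M₁) (y : M₂) (z : M₃), f x (-y) z = - f x y z := by
  intro x y z
  have h0 : f x 0 z = 0 := by
    have := tri_add2 K h x 0 0 z; simpa using this.symm
  have := tri_add2 K h x y (-y) z
  rw [add_neg_cancel, h0] at this
  exact (eq_neg_of_add_eq_zero_right this.symm)

theorem tri_neg3 (h : IsTrilinearMap K f) :
    ∀ (x : M₁) (y : M₂) (z : M₃), f x y (-z) = - f x y z := by
  intro x y z
  have h0 : f x y 0 = 0 := by
    have := tri_add3 K h x y 0 0; simpa using this.symm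
  have := tri_add3 K h x y z (-z)
  rw [add_neg_cancel, h0] at this
  exact (eq_neg_of_add_eq_zero_right this.symm)

theorem tri_sub1 (h : IsTrilinearMap K f) :
    ∀ (x x' : M₁) (y : M₂) (z : M₃), f (x - x') y z = f x y z - f x' y z := by
  intro x x' y z
  rw [sub_eq_add_neg, tri_add1 K h, tri_neg1 K h, sub_eq_add_neg]

theorem tri_sub2 (h : IsTrilinearMap K f) :
    ∀ (x : M₁) (y y' : M₂) (z : M₃), f x (y - y') z = f x y z - f x y' z := by
  intro x y y' z
  rw [sub_eq_add_neg, tri_add2 K h, tri_neg2 K h, sub_eq_add_neg]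

theorem tri_sub3 (h : IsTrilinearMap K f) :
    ∀ (x : M₁) (y : M₂) (z z' : M₃), f x y (z - z') = f x y z - f x y z' := by
  intro x y z z'
  rw [sub_eq_add_neg, tri_add3 K h, tri_neg3 K h, sub_eq_add_neg]

end AuxTri

/-- `ρ(x,y)z = ↖(x,y,z) + ↗(z,x,y) - ↗(z,y,x)` is a representation of the
associated 3-Lie algebra `(A, [·,·,·]^C)` of a 3-L-dendriform algebra. -/
theorem stmt13 {A : Type v} [AddCommGroup A] [Module K A]
    (nw ne : A → A → A → A) (hden : Is3LDendriform K nw ne) :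
    Is3LieRep K (cOp nw ne) (fun x y z => nw x y z + ne z x y - ne z y x) := by
  obtain ⟨tnw, tne, h0, h1, h2, h3, h4, h5, h6⟩ := hden
  refine ⟨⟨?_, ?_, ?_⟩, ?_, ?_, ?_⟩
  · intro c x x' y z
    simp only [tnw.1, tne.2.1, tne.2.2]
    module
  · intro c x y y' z
    simp only [tnw.2.1, tne.2.1, tne.2.2]
    module
  · intro c x y z z'
    simp only [tnw.2.2, tne.1, tne.2.1]
    module
  · intro x y v
    simp only []
    linear_combination (norm := module) h0 x y v
  · intro x1 x2 x3 x4 v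
    simp only []
    have e0 := h1 x1 x2 x3 x4 v
    have e1 := h2 x1 x2 x3 x4 v
    have e2 := h2 x1 x2 x4 x3 v
    have e3 := h2 x1 x3 x4 x2 v
    have e4 := h2 x2 x3 x4 x1 v
    have e5 := h2 x3 x1 x4 x2 v
    have e6 := h2 x3 x4 x2 x1 v
    have e7 := h3 x1 x4 x3 x2 v
    have e8 := h3 x3 x4 x1 x2 v
    have e9 := h5 x1 x3 x4 x2 v
    have e10 := h5 x1 x4 x3 x2 v
    have e11 := h6 x1 x4 x3 x2 v
    have e12 := h6 x2 x3 x4 x1 v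
    simp only [cOp, hOp, vOp, tri_add1 K tnw, tri_add2 K tnw, tri_add3 K tnw, tri_sub1 K tnw, tri_sub2 K tnw, tri_sub3 K tnw, tri_neg1 K tnw, tri_neg2 K tnw, tri_neg3 K tnw, tri_add1 K tne, tri_add2 K tne, tri_add3 K tne, tri_sub1 K tne, tri_sub2 K tne, tri_sub3 K tne, tri_neg1 K tne, tri_neg2 K tne, tri_neg3 K tne] at e0 e1 e2 e3 e4 e5 e6 e7 e8 e9 e10 e11 e12 ⊢
    linear_combination (norm := module) e0 + e1 - e2 + e3 - e4 - e5 + e6 + e7 - e8 + e9 - e10 - e11 + e12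
  · intro x1 x2 x3 x4 v
    simp only []
    have e0 := h2 x1 x2 x4 x3 v
    have e1 := h2 x1 x4 x3 x2 v
    have e2 := h2 x2 x3 x4 x1 v
    have e3 := h2 x2 x4 x1 x3 v
    have e4 := h2 x3 x1 x4 x2 v
    have e5 := h2 x3 x4 x2 x1 v
    have e6 := h3 x1 x2 x4 x3 v
    have e7 := h3 x2 x3 x4 x1 v
    have e8 := h3 x3 x1 x4 x2 v
    have e9 := h4 x1 x2 x3 x4 v
    have e10 := h5 x1 x2 x3 x4 v
    simp only [cOp, hOp, vOp, tri_add1 K tnw, tri_add2 K tnw, tri_add3 K tnw, tri_sub1 K tnw, tri_sub2 K tnw, tri_sub3 K tnw, tri_neg1 K tnw, tri_neg2 K tnw, tri_neg3 K tnw, tri_add1 K tne, tri_add2 K tne, tri_add3 K tne, tri_sub1 K tne, tri_sub2 K tne, tri_sub3 K tne, tri_neg1 K tne, tri_neg2 K tne, tri_neg3 K tne] at e0 e1 e2 e3 e4 e5 e6 e7 e8 e9 e10 ⊢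
    linear_combination (norm := module) e0 - e1 + e2 - e3 + e4 - e5 - e6 - e7 - e8 + e9 + e10
end

section
/- Let (A,{·,·,·}) be a 3-pre-Lie algebra over a field K of characteristic 0 and let R : A → A be a Rota-Baxter operator of weight 0 on A. Then the operations ↖(x,y,z) := {R(x),R(y),z} and ↗(x,y,z) := {x,R(y),R(z)} define a 3-L-dendriform algebra structure on A. -/
universe u v w

variable (K : Type u) [Field K] [CharZero K]

/-!
A Rota-Baxter operator of weight 0 is exactly an `𝒪`-operator for the adjoint representation
`l(x, y) z = {x, y, z}`, `r(x, y) z = {z, x, y}` of the 3-pre-Lie algebra on itself. For an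
`𝒪`-operator `T`, the identities `T {u,v,w}^h = {Tu, Tv, Tw}` and `T [u,v,w]^C = [Tu, Tv, Tw]^C`
turn each of the axioms (L0)-(L6) of the induced operations `↖(u,v,w) = l(Tu,Tv)w`,
`↗(u,v,w) = r(Tv,Tw)u` into one of the representation axioms, with `{u,v,w}^v = μ(Tu,Tv)w`.
-/

section Development

variable {K}
omit [CharZero K]

namespace IsTrilinearMap

variable {M₁ M₂ M₃ M₄ N₁ N₂ N₃ : Type*}
  [AddCommGroup M₁] [Module K M₁] [AddCommGroup M₂] [Module K M₂]
  [AddCommGroup M₃] [Module K M₃] [AddCommGroup M₄] [Module K M₄]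
  [AddCommGroup N₁] [Module K N₁] [AddCommGroup N₂] [Module K N₂]
  [AddCommGroup N₃] [Module K N₃]
  {f : M₁ → M₂ → M₃ → M₄}

theorem rotate (hf : IsTrilinearMap K f) : IsTrilinearMap K fun z x y => f x y z :=
  ⟨fun c z z' x y => hf.2.2 c x y z z', fun c z x x' y => hf.1 c x x' y z,
    fun c z x y y' => hf.2.1 c x y y' z⟩

theorem comp_linearMap (hf : IsTrilinearMap K f) (S : N₁ →ₗ[K] M₁) (T : N₂ →ₗ[K] M₂)
    (U : N₃ →ₗ[K] M₃) : IsTrilinearMap K fun x y z => f (S x) (T y) (U z) := by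
  refine ⟨fun c x x' y z => ?_, fun c x y y' z => ?_, fun c x y z z' => ?_⟩ <;>
    simp only [map_add, map_smul]
  exacts [hf.1 .., hf.2.1 .., hf.2.2 ..]

theorem map_neg_right (hf : IsTrilinearMap K f) (x : M₁) (y : M₂) (z : M₃) :
    f x y (-z) = -f x y z :=
  (AddMonoidHom.mk' (f x y) fun a b => by simpa using hf.2.2 1 x y a b).map_neg z

end IsTrilinearMap

section OOperator

variable {A V : Type*} [AddCommGroup A] [Module K A] [AddCommGroup V] [Module K V]
  {p : A → A → A → A} {l r : A → A → V → V} {T : V →ₗ[K] A}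

namespace IsOOperator3PreLie

variable (hT : IsOOperator3PreLie K p l r T)
include hT

theorem map_hOp (u v w : V) :
    T (hOp (fun u v w => l (T u) (T v) w) (fun u v w => r (T v) (T w) u) u v w)
      = p (T u) (T v) (T w) := by
  rw [hT, hOp]
  congr 1
  abel

theorem map_cOp (u v w : V) :
    T (cOp (fun u v w => l (T u) (T v) w) (fun u v w => r (T v) (T w) u) u v w)
      = preC p (T u) (T v) (T w) := by
  simp only [cOp, map_add, hT.map_hOp, preC]

theorem is3LDendriform (hρ : Is3PreLieRep K p l r) :
    Is3LDendriform K (fun u v w => l (T u) (T v) w) (fun u v w => r (T v) (T w) u) := by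
  obtain ⟨hl, hr, ⟨-, hl_skew, hl_comm, hl_preC⟩, hrep1, hrep2, hrep3, hrep4⟩ := hρ
  refine ⟨hl.comp_linearMap T T LinearMap.id, (hr.comp_linearMap T T LinearMap.id).rotate,
    fun x1 x2 x3 => ?_, fun x1 x2 x3 x4 x5 => ?_, fun x1 x2 x3 x4 x5 => ?_,
    fun x1 x2 x3 x4 x5 => ?_, fun x1 x2 x3 x4 x5 => ?_, fun x1 x2 x3 x4 x5 => ?_,
    fun x1 x2 x3 x4 x5 => ?_⟩ <;>
    simp only [hT.map_hOp, hT.map_cOp, vOp]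
  · rw [hl_skew (T x1)]
    exact neg_add_cancel _
  · exact hl_comm ..
  · linear_combination (norm := abel) hrep1 (T x1) (T x2) (T x3) (T x4) x5
  · linear_combination (norm := abel) hrep3 (T x1) (T x2) (T x3) (T x4) x5
  · exact hl_preC ..
  · exact hrep2 ..
  · linear_combination (norm := abel) -hrep4 (T x1) (T x2) (T x3) (T x4) x5

end IsOOperator3PreLie

end OOperator

section Adjoint

variable {A : Type*} [AddCommGroup A] [Module K A] {p : A → A → A → A}

namespace Is3PreLie

variable (hp : Is3PreLie K p)
include hp

theorem preC_eq (x y z : A) : preC p x y z = p x y z + p z x y - p z y x := by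
  rw [preC, hp.2.1 y z x, sub_eq_add_neg]
  abel

theorem preC_middle_eq_cyclic (a b c d e : A) :
    p e (preC p a b c) d = p a b (p e c d) + p b c (p e a d) + p c a (p e b d) := by
  have hneg := hp.1.map_neg_right
  rw [hp.2.1 e, hp.2.2.2 a b c e d, hp.2.1 c e, hneg, hp.2.1 a e, hneg, hp.2.1 b e, hneg]
  abel

theorem preC_middle_eq_alternating (a b c d e : A) :
    p e (preC p a b c) d = -p e c (p a b d) + p e b (p a c d) - p e a (p b c d) := by
  linear_combination (norm := abel)
    -hp.2.2.1 a b e c d - hp.2.2.2 a b e c d - hp.2.1 b e (p a c d)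

theorem is3PreLieRep_adjoint : Is3PreLieRep K p p fun x y z => p z x y := by
  have ⟨ht, hs, h1, h2⟩ := hp
  refine ⟨ht, ht.rotate.rotate, ⟨ht, hs, fun x1 x2 x3 x4 v => ?_, h2⟩,
    fun x1 x2 x3 x4 v => ?_, hp.preC_middle_eq_cyclic, fun x1 x2 x3 x4 v => ?_,
    fun x1 x2 x3 x4 v => ?_⟩
  · linear_combination (norm := abel) h1 x1 x2 x3 x4 v + hs x3 (preC p x1 x2 x4) v
  all_goals simp only [← hp.preC_eq]
  · exact h1 ..
  · have hswap : p v x1 (p x3 x2 x4) = -p v x1 (p x2 x3 x4) := by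
      rw [hs x3 x2, ht.map_neg_right]
    -- (P2) at `x1 x2 v` minus (P2) at `x1 x3 v`; the leftover terms are the difference of the
    -- two expansions of `{v, [x1,x2,x3]^C, x4}`.
    linear_combination (norm := abel)
      -h2 x1 x2 v x3 x4 + h2 x1 x3 v x2 x4 + hp.preC_middle_eq_cyclic x1 x2 x3 x4 v
        - hp.preC_middle_eq_alternating x1 x2 x3 x4 v + hswap - hs x2 v (p x1 x3 x4)
        + hs x3 v (p x1 x2 x4) + hs x3 x1 (p v x2 x4)
  · linear_combination (norm := abel) h2 x1 x2 v x3 x4 + hs x2 v (p x1 x3 x4)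

theorem isOOperator3PreLie_of_isRotaBaxter3 {R : A →ₗ[K] A} (hR : IsRotaBaxter3 K p R) :
    IsOOperator3PreLie K p p (fun x y z => p z x y) R := by
  intro u v w
  beta_reduce
  rw [hR, hp.2.1 v (R u) (R w)]
  congr 1
  abel

end Is3PreLie

end Adjoint

end Development

/-- A Rota-Baxter operator `R` of weight 0 on a 3-pre-Lie algebra induces a
3-L-dendriform structure `↖(x,y,z) = {R(x),R(y),z}`, `↗(x,y,z) = {x,R(y),R(z)}` on `A`. -/
theorem stmt15 {A : Type v} [AddCommGroup A] [Module K A]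
    (p : A → A → A → A) (hp : Is3PreLie K p)
    (R : A →ₗ[K] A)
    (hR : ∀ x y z : A,
      p (R x) (R y) (R z) = R (p (R x) (R y) z + p (R x) y (R z) + p x (R y) (R z))) :
    Is3LDendriform K (fun x y z => p (R x) (R y) z) (fun x y z => p x (R y) (R z)) :=
  (hp.isOOperator3PreLie_of_isRotaBaxter3 hR).is3LDendriform hp.is3PreLieRep_adjoint
end
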